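/- Let T be a complete theory, M a small model, and p a global M-invariant type. If for every global type q finitely satisfiable in M one has (p ⊗ q)|_M = (q ⊗ p)|_M, then p is a heir of its restriction to M; that is, for every formula φ(x;d) ∈ p with φ(x;y) over M and d in U, there exists b ∈ M with φ(x;b) ∈ p. -/

import Mathlib

open FirstOrder FirstOrder.Language

namespace Paper

variable {L : Language} {U : Type*} [L.Structure U]

/-- `a` realizes the formula `φ(x; d)` where `d` is a tuple of parameters from `U`. -/
def Rz {γ : Type*} {n : ℕ} (a : γ → U) (φ : L.Formula (γ ⊕ Fin n)) (d : Fin n → U) : Prop :=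
  φ.Realize (Sum.elim a d)

/-- A global type over the monster `U` in variables `γ` : a complete, finitely
satisfiable set of formulas with parameters from `U` (given as explicit tuples). -/
structure GType (L : Language) (U : Type*) [L.Structure U] (γ : Type*) where
  mem : ∀ {n : ℕ}, L.Formula (γ ⊕ Fin n) → (Fin n → U) → Prop
  complete : ∀ {n : ℕ} (φ : L.Formula (γ ⊕ Fin n)) (d : Fin n → U), mem φ d ∨ mem φ.not d
  finSat : ∀ (s : List (Σ n : ℕ, L.Formula (γ ⊕ Fin n) × (Fin n → U))),
    (∀ x ∈ s, mem x.2.1 x.2.2) → ∃ a : γ → U, ∀ x ∈ s, Rz a x.2.1 x.2.2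

/-- `a ≡_A b` : same type over the parameter set `A`. -/
def SameTypeOver (A : Set U) {γ : Type*} (a b : γ → U) : Prop :=
  ∀ {j : ℕ} (ψ : L.Formula (γ ⊕ Fin j)) (e : Fin j → U), (∀ i, e i ∈ A) →
    (Rz a ψ e ↔ Rz b ψ e)

/-- A global type is `A`-invariant. -/
def Invariant (A : Set U) {γ : Type*} (p : GType L U γ) : Prop :=
  ∀ {n : ℕ} (φ : L.Formula (γ ⊕ Fin n)) (d d' : Fin n → U),
    SameTypeOver (L := L) A d d' → (p.mem φ d ↔ p.mem φ d')

/-- A global type is finitely satisfiable in `A` : every formula in it has a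
realization with coordinates from `A`. -/
def FinSatIn (A : Set U) {γ : Type*} (p : GType L U γ) : Prop :=
  ∀ {n : ℕ} (φ : L.Formula (γ ⊕ Fin n)) (d : Fin n → U), p.mem φ d →
    ∃ a : γ → U, (∀ i, a i ∈ A) ∧ Rz a φ d

/-- A global type is definable over `A`. -/
def DefinableOver (A : Set U) {γ : Type*} (p : GType L U γ) : Prop :=
  ∀ {n : ℕ} (φ : L.Formula (γ ⊕ Fin n)), ∃ (j : ℕ) (e : Fin j → U),
    (∀ i, e i ∈ A) ∧ ∃ ψ : L.Formula (Fin n ⊕ Fin j),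
      ∀ d : Fin n → U, (p.mem φ d ↔ ψ.Realize (Sum.elim d e))

/-- `a ⊨ p|_A` : the tuple `a` realizes the restriction of `p` to parameters in `A`. -/
def RealizesOver {γ : Type*} (p : GType L U γ) (a : γ → U) (A : Set U) : Prop :=
  ∀ {n : ℕ} (φ : L.Formula (γ ⊕ Fin n)) (d : Fin n → U), (∀ i, d i ∈ A) →
    p.mem φ d → Rz a φ d

/-- Substitute a tuple of parameters for the second variable block `y` of
`φ(x, y; z)`, producing a formula `φ(x; y⌢z)`. -/
def substY {m k n : ℕ} (φ : L.Formula ((Fin m ⊕ Fin k) ⊕ Fin n)) :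
    L.Formula (Fin m ⊕ Fin (k + n)) :=
  φ.relabel (Sum.elim (Sum.map id (Fin.castAdd n)) (fun j => Sum.inr (Fin.natAdd k j)))

/-- Substitute a tuple of parameters for the first variable block `x` of
`φ(x, y; z)`, producing a formula `φ(y; x⌢z)`. -/
def substX {m k n : ℕ} (φ : L.Formula ((Fin m ⊕ Fin k) ⊕ Fin n)) :
    L.Formula (Fin k ⊕ Fin (m + n)) :=
  φ.relabel (Sum.elim (Sum.elim (fun i => Sum.inr (Fin.castAdd n i)) Sum.inl)
    (fun j => Sum.inr (Fin.natAdd m j)))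

/-- Membership `φ(x,y;d) ∈ p(x) ⊗ q(y)` for an `A`-invariant type `p` :
for any `b ⊨ q|_{A ∪ d}` (in the monster), `φ(x, b; d) ∈ p`. -/
def ProdMem (A : Set U) {m k : ℕ} (p : GType L U (Fin m)) (q : GType L U (Fin k))
    {n : ℕ} (φ : L.Formula ((Fin m ⊕ Fin k) ⊕ Fin n)) (d : Fin n → U) : Prop :=
  ∀ b : Fin k → U, RealizesOver q b (A ∪ Set.range d) → p.mem (substY φ) (Fin.append b d)

/-- Membership `φ(x,y;d) ∈ q(y) ⊗ p(x)` (variables kept in the order `x, y`). -/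
def ProdMemRev (A : Set U) {m k : ℕ} (p : GType L U (Fin m)) (q : GType L U (Fin k))
    {n : ℕ} (φ : L.Formula ((Fin m ⊕ Fin k) ⊕ Fin n)) (d : Fin n → U) : Prop :=
  ∀ a : Fin m → U, RealizesOver p a (A ∪ Set.range d) → q.mem (substX φ) (Fin.append a d)

/-- `p ⊗ q = q ⊗ p` as global types. -/
def Commute (A : Set U) {m k : ℕ} (p : GType L U (Fin m)) (q : GType L U (Fin k)) : Prop :=
  ∀ {n : ℕ} (φ : L.Formula ((Fin m ⊕ Fin k) ⊕ Fin n)) (d : Fin n → U),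
    ProdMem A p q φ d ↔ ProdMemRev A p q φ d

/-- `(p ⊗ q)|_B = (q ⊗ p)|_B` : the products agree on parameters from `B`. -/
def CommuteOn (A B : Set U) {m k : ℕ} (p : GType L U (Fin m)) (q : GType L U (Fin k)) : Prop :=
  ∀ {n : ℕ} (φ : L.Formula ((Fin m ⊕ Fin k) ⊕ Fin n)) (d : Fin n → U), (∀ i, d i ∈ B) →
    (ProdMem A p q φ d ↔ ProdMemRev A p q φ d)

/-- A sequence of `k`-tuples indexed by a linear order is indiscernible over `A`. -/
def IndiscOver (A : Set U) {ι : Type*} [LinearOrder ι] {k : ℕ} (b : ι → Fin k → U) : Prop :=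
  ∀ (j r : ℕ) (ψ : L.Formula ((Fin j × Fin k) ⊕ Fin r)) (e : Fin r → U), (∀ i, e i ∈ A) →
    ∀ f g : Fin j → ι, StrictMono f → StrictMono g →
      (ψ.Realize (Sum.elim (fun v => b (f v.1) v.2) e) ↔
        ψ.Realize (Sum.elim (fun v => b (g v.1) v.2) e))

/-- Two sequences are mutually indiscernible over `A`. -/
def MutIndisc (A : Set U) {k₀ k₁ : ℕ} (I : ℕ → Fin k₀ → U) (J : ℕ → Fin k₁ → U) : Prop :=
  IndiscOver (L := L) (A ∪ ⋃ t, Set.range (J t)) I ∧ IndiscOver (L := L) (A ∪ ⋃ t, Set.range (I t)) J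

/-- The formula `φ(x; d)` divides over `A`. -/
def Divides (A : Set U) {γ : Type*} {n : ℕ} (φ : L.Formula (γ ⊕ Fin n)) (d : Fin n → U) : Prop :=
  ∃ I : ℕ → Fin n → U, I 0 = d ∧ IndiscOver (L := L) A I ∧ ¬ ∃ a : γ → U, ∀ t, Rz a φ (I t)

/-- The formula `φ(x; d)` forks over `A` : it implies a finite disjunction of
formulas dividing over `A`. -/
def Forks (A : Set U) {γ : Type*} {n : ℕ} (φ : L.Formula (γ ⊕ Fin n)) (d : Fin n → U) : Prop :=
  ∃ s : List (Σ m : ℕ, L.Formula (γ ⊕ Fin m) × (Fin m → U)),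
    (∀ x ∈ s, Divides A x.2.1 x.2.2) ∧
    ∀ a : γ → U, Rz a φ d → ∃ x ∈ s, Rz a x.2.1 x.2.2

/-- The (complete theory of the monster) is NIP : no formula has the independence property. -/
def IsNIP (L : Language) (U : Type*) [L.Structure U] : Prop :=
  ∀ (m n : ℕ) (φ : L.Formula (Fin m ⊕ Fin n)),
    ¬ ∃ (a : ℕ → Fin m → U) (b : Finset ℕ → Fin n → U),
      ∀ (i : ℕ) (s : Finset ℕ), (φ.Realize (Sum.elim (a i) (b s)) ↔ i ∈ s)

/-- dp-minimality : every singleton has dp-rank 1. -/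
def IsDpMinimal (L : Language) (U : Type*) [L.Structure U] : Prop :=
  ∀ (A : Set U) (c : U) {k₀ k₁ : ℕ} (I : ℕ → Fin k₀ → U) (J : ℕ → Fin k₁ → U),
    MutIndisc (L := L) A I J →
      IndiscOver (L := L) (A ∪ {c}) I ∨ IndiscOver (L := L) (A ∪ {c}) J

/-- Every type (set of formulas, in `k` free variables, with parameters from `A`)
which is finitely satisfiable in `U` is realized in `U`. -/
def RealizesTypesOver (L : Language) (U : Type*) [L.Structure U] (A : Set U) : Prop :=
  ∀ (k : ℕ) (S : Set (Σ n : ℕ, L.Formula (Fin k ⊕ Fin n) × (Fin n → U))),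
    (∀ x ∈ S, ∀ i, x.2.2 i ∈ A) →
    (∀ s : List (Σ n : ℕ, L.Formula (Fin k ⊕ Fin n) × (Fin n → U)),
      (∀ x ∈ s, x ∈ S) → ∃ a : Fin k → U, ∀ x ∈ s, Rz a x.2.1 x.2.2) →
    ∃ a : Fin k → U, ∀ x ∈ S, Rz a x.2.1 x.2.2

/-- Same, but the realization is found inside the set `N`. -/
def RealizesTypesOverIn (L : Language) (U : Type*) [L.Structure U] (A N : Set U) : Prop :=
  ∀ (k : ℕ) (S : Set (Σ n : ℕ, L.Formula (Fin k ⊕ Fin n) × (Fin n → U))),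
    (∀ x ∈ S, ∀ i, x.2.2 i ∈ A) →
    (∀ s : List (Σ n : ℕ, L.Formula (Fin k ⊕ Fin n) × (Fin n → U)),
      (∀ x ∈ s, x ∈ S) → ∃ a : Fin k → U, ∀ x ∈ s, Rz a x.2.1 x.2.2) →
    ∃ a : Fin k → U, (∀ i, a i ∈ N) ∧ ∀ x ∈ S, Rz a x.2.1 x.2.2

/-- `U` is a monster model relative to the small set `A` : it realizes all types
over `A` together with countably many extra parameters. -/
def Monster (L : Language) (U : Type*) [L.Structure U] (A : Set U) : Prop :=
  ∀ (e : ℕ → U), RealizesTypesOver L U (A ∪ Set.range e)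

/-- `M ≺⁺ N` (as subsets of the monster `U`) : `N` contains `M` and realizes (inside
itself) all types over `M` together with countably many extra parameters from `N`. -/
def SatPair (L : Language) (U : Type*) [L.Structure U] (M N : Set U) : Prop :=
  M ⊆ N ∧ ∀ (e : ℕ → U), (∀ i, e i ∈ N) → RealizesTypesOverIn L U (M ∪ Set.range e) N

end Paper

/-!
Let `q` be a global coheir of `tp(d/M)`, i.e. an ultrafilter on `M`-tuples extending it.
Every `b ⊨ q|_M` has the same type as `d` over `M`, so `φ(x; b) ∈ p` by invariance:
`φ(x; y) ∈ p ⊗ q`. By commutation `φ(x; y) ∈ q ⊗ p`, so for a realization `a` of `p|_M`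
the formula `φ(a; y)` lies in `q`, and finite satisfiability of `q` yields `b ∈ M` with
`φ(a; b)`; as `a ⊨ p|_M`, this means `φ(x; b) ∈ p`.
-/

namespace Paper

open Filter

variable {L : Language} {U : Type*} [L.Structure U]

namespace GType

variable {γ : Type*} (p : GType L U γ)

theorem mem_congr {n n' : ℕ} {φ : L.Formula (γ ⊕ Fin n)} {d : Fin n → U}
    {ψ : L.Formula (γ ⊕ Fin n')} {e : Fin n' → U} (h : ∀ a : γ → U, Rz a φ d ↔ Rz a ψ e)
    (hφ : p.mem φ d) : p.mem ψ e := by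
  refine (p.complete ψ e).resolve_right fun hψ => ?_
  obtain ⟨a, ha⟩ := p.finSat [⟨n, φ, d⟩, ⟨n', ψ.not, e⟩] (by simp [hφ, hψ])
  exact Formula.realize_not.mp (ha ⟨n', ψ.not, e⟩ (by simp)) ((h a).mp (ha ⟨n, φ, d⟩ (by simp)))

theorem not_mem_not {n : ℕ} {φ : L.Formula (γ ⊕ Fin n)} {d : Fin n → U} (hφ : p.mem φ d) :
    ¬ p.mem φ.not d := fun hn => by
  obtain ⟨a, ha⟩ := p.finSat [⟨n, φ, d⟩, ⟨n, φ.not, d⟩] (by simp [hφ, hn])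
  exact Formula.realize_not.mp (ha ⟨n, φ.not, d⟩ (by simp)) (ha ⟨n, φ, d⟩ (by simp))

def ofUltrafilter (A : Set U) (𝒰 : Ultrafilter (γ → A)) : GType L U γ where
  mem φ d := ∀ᶠ b in (𝒰 : Filter (γ → A)), Rz (Subtype.val ∘ b) φ d
  complete φ d := by
    simp only [Rz, Formula.realize_not]
    exact Ultrafilter.eventually_or.mp (.of_forall fun _ => em _)
  finSat s hs := by
    obtain ⟨b, hb⟩ := ((Filter.eventually_all_finite s.finite_toSet).mpr hs).exists
    exact ⟨_, hb⟩

theorem finSatIn_ofUltrafilter (A : Set U) (𝒰 : Ultrafilter (γ → A)) :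
    FinSatIn A (ofUltrafilter (L := L) A 𝒰) := fun _ _ h => by
  obtain ⟨b, hb⟩ := Filter.Eventually.exists h
  exact ⟨_, fun i => (b i).2, hb⟩

end GType

theorem RealizesOver.mono {γ : Type*} {q : GType L U γ} {b : γ → U} {A B : Set U}
    (hb : RealizesOver q b B) (hAB : A ⊆ B) : RealizesOver q b A :=
  fun ψ e he => hb ψ e fun i => hAB (he i)

theorem RealizesOver.mem_of_rz {γ : Type*} {p : GType L U γ} {a : γ → U} {A : Set U}
    (ha : RealizesOver p a A) {n : ℕ} {φ : L.Formula (γ ⊕ Fin n)} {d : Fin n → U}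
    (hd : ∀ i, d i ∈ A) (hφ : Rz a φ d) : p.mem φ d :=
  (p.complete φ d).resolve_right fun hn => Formula.realize_not.mp (ha φ.not d hd hn) hφ

theorem realizesOver_of_forall_mem {γ : Type*} {q : GType L U γ} {d : γ → U} {A : Set U}
    (h : ∀ {n : ℕ} (ψ : L.Formula (γ ⊕ Fin n)) (e : Fin n → U), (∀ i, e i ∈ A) → Rz d ψ e →
      q.mem ψ e) : RealizesOver q d A := fun ψ e he hψ => by
  by_contra hd
  exact q.not_mem_not hψ (h ψ.not e he (Formula.realize_not.mpr hd))

theorem RealizesOver.sameTypeOver {γ : Type*} {q : GType L U γ} {A : Set U} {d b : γ → U}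
    (hd : RealizesOver q d A) (hb : RealizesOver q b A) : SameTypeOver (L := L) A d b := by
  intro j ψ e he
  rcases q.complete ψ e with h | h
  · exact iff_of_true (hd ψ e he h) (hb ψ e he h)
  · exact iff_of_false (Formula.realize_not.mp (hd _ e he h))
      (Formula.realize_not.mp (hb _ e he h))

theorem Monster.exists_realizesOver {A : Set U} (hmon : Monster L U A) [Nonempty U] {m : ℕ}
    (p : GType L U (Fin m)) : ∃ a : Fin m → U, RealizesOver p a A := by
  obtain ⟨a, ha⟩ := hmon (fun _ => Classical.arbitrary U) m
    {x | (∀ i, x.2.2 i ∈ A) ∧ p.mem x.2.1 x.2.2}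
    (fun x hx i => Or.inl (hx.1 i)) (fun s hs => p.finSat s fun x hx => (hs x hx).2)
  exact ⟨a, fun ψ e he hψ => ha ⟨_, ψ, e⟩ ⟨he, hψ⟩⟩

def conj {γ : Type*} {n₁ n₂ : ℕ} (ψ₁ : L.Formula (γ ⊕ Fin n₁)) (ψ₂ : L.Formula (γ ⊕ Fin n₂)) :
    L.Formula (γ ⊕ Fin (n₁ + n₂)) :=
  ψ₁.relabel (Sum.map id (Fin.castAdd n₂)) ⊓ ψ₂.relabel (Sum.map id (Fin.natAdd n₁))

theorem rz_conj {γ : Type*} {n₁ n₂ : ℕ} (ψ₁ : L.Formula (γ ⊕ Fin n₁))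
    (ψ₂ : L.Formula (γ ⊕ Fin n₂)) (a : γ → U) (e₁ : Fin n₁ → U) (e₂ : Fin n₂ → U) :
    Rz a (conj ψ₁ ψ₂) (Fin.append e₁ e₂) ↔ Rz a ψ₁ e₁ ∧ Rz a ψ₂ e₂ := by
  have h₁ : Sum.elim a (Fin.append e₁ e₂) ∘ Sum.map id (Fin.castAdd n₂) = Sum.elim a e₁ := by
    ext (_ | _) <;> simp
  have h₂ : Sum.elim a (Fin.append e₁ e₂) ∘ Sum.map id (Fin.natAdd n₁) = Sum.elim a e₂ := by
    ext (_ | _) <;> simp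
  simp only [Rz, conj, Formula.realize_inf, Formula.realize_relabel, h₁, h₂]

theorem exists_mem_rz_of_rz (M : L.ElementarySubstructure U) {γ : Type*} [Finite γ] {n : ℕ}
    (ψ : L.Formula (γ ⊕ Fin n)) {e : Fin n → U} (he : ∀ i, e i ∈ M) {a : γ → U}
    (ha : Rz a ψ e) : ∃ b : γ → U, (∀ i, b i ∈ M) ∧ Rz b ψ e := by
  let e' : Fin n → M := fun i => ⟨e i, he i⟩
  have hex : ∀ {V : Type _} [L.Structure V] (v : Fin n → V),
      ((ψ.relabel Sum.swap).iExs γ).Realize v ↔ ∃ b : γ → V, ψ.Realize (Sum.elim b v) := by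
    intro V _ v
    simp only [Formula.realize_iExs, Formula.realize_relabel, Sum.elim_swap]
  have hM : ((ψ.relabel Sum.swap).iExs γ).Realize e' := by
    rw [← M.subtype.map_formula]
    exact (hex e).mpr ⟨a, ha⟩
  obtain ⟨b, hb⟩ := (hex e').mp hM
  refine ⟨Subtype.val ∘ b, fun i => (b i).2, ?_⟩
  have := (M.subtype.map_formula ψ (Sum.elim b e')).mpr hb
  rwa [Sum.comp_elim, ElementarySubstructure.coe_subtype] at this

/-- The coheir is an ultrafilter containing the traces on `M` of the formulas over `M` true of
`d`; these traces are closed under intersection (`conj`) and nonempty by elementarity. -/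
theorem exists_finSatIn_realizesOver (M : L.ElementarySubstructure U) {γ : Type*} [Finite γ]
    (d : γ → U) : ∃ q : GType L U γ, FinSatIn (M : Set U) q ∧ RealizesOver q d M := by
  let ι := {x : Σ j : ℕ, L.Formula (γ ⊕ Fin j) × (Fin j → U) //
    (∀ i, x.2.2 i ∈ M) ∧ Rz d x.2.1 x.2.2}
  let trace (x : ι) : Set (γ → (M : Set U)) := {b | Rz (Subtype.val ∘ b) x.1.2.1 x.1.2.2}
  have : Nonempty ι := ⟨⟨⟨0, ⊤, finZeroElim⟩, finZeroElim, by simp [Rz]⟩⟩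
  have hne : (⨅ x : ι, 𝓟 (trace x)).NeBot := by
    refine iInf_neBot_of_directed' (fun x y => ?_) fun x => principal_neBot_iff.mpr ?_
    · refine ⟨⟨⟨_, conj x.1.2.1 y.1.2.1, Fin.append x.1.2.2 y.1.2.2⟩,
        fun i => Fin.addCases (by simpa using x.2.1) (by simpa using y.2.1) i,
        (rz_conj _ _ _ _ _).mpr ⟨x.2.2, y.2.2⟩⟩, ?_⟩
      simp only [ge_iff_le, principal_mono]
      exact ⟨fun b hb => ((rz_conj _ _ _ _ _).mp hb).1, fun b hb => ((rz_conj _ _ _ _ _).mp hb).2⟩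
    · obtain ⟨b, hbM, hb⟩ := exists_mem_rz_of_rz M x.1.2.1 x.2.1 x.2.2
      exact ⟨fun i => ⟨b i, hbM i⟩, hb⟩
  let 𝒰 := Ultrafilter.of (⨅ x : ι, 𝓟 (trace x))
  refine ⟨GType.ofUltrafilter _ 𝒰, GType.finSatIn_ofUltrafilter _ 𝒰,
    realizesOver_of_forall_mem fun ψ e he hψ => ?_⟩
  exact Ultrafilter.of_le _ (mem_iInf_of_mem ⟨⟨_, ψ, e⟩, he, hψ⟩ (mem_principal_self _))

theorem rz_substY_relabel_inl {m k n : ℕ} (φ : L.Formula (Fin m ⊕ Fin k)) (a : Fin m → U)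
    (b : Fin k → U) (d : Fin n → U) :
    Rz a (substY (φ.relabel Sum.inl : L.Formula (_ ⊕ Fin n))) (Fin.append b d) ↔ Rz a φ b := by
  have h : Sum.elim a (Fin.append b d) ∘
      Sum.elim (Sum.map id (Fin.castAdd n)) (fun j => Sum.inr (Fin.natAdd k j)) ∘ Sum.inl =
      Sum.elim a b := by
    ext (_ | _) <;> simp
  simp only [Rz, substY, Formula.realize_relabel, Function.comp_assoc, h]

theorem rz_substX_relabel_inl {m k n : ℕ} (φ : L.Formula (Fin m ⊕ Fin k)) (a : Fin m → U)
    (b : Fin k → U) (d : Fin n → U) :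
    Rz b (substX (φ.relabel Sum.inl : L.Formula (_ ⊕ Fin n))) (Fin.append a d) ↔ Rz a φ b := by
  have h : Sum.elim b (Fin.append a d) ∘ Sum.elim (Sum.elim (fun i => Sum.inr (Fin.castAdd n i))
      Sum.inl) (fun j => Sum.inr (Fin.natAdd m j)) ∘ Sum.inl = Sum.elim a b := by
    ext (_ | _) <;> simp
  simp only [Rz, substX, Formula.realize_relabel, Function.comp_assoc, h]

theorem prodMem_relabel_inl {A : Set U} {m k n : ℕ} {p : GType L U (Fin m)}
    (hinv : Invariant A p) {q : GType L U (Fin k)} {d : Fin k → U} (hq : RealizesOver q d A)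
    {φ : L.Formula (Fin m ⊕ Fin k)} (hφ : p.mem φ d) (d₀ : Fin n → U) :
    ProdMem A p q (φ.relabel Sum.inl) d₀ := fun b hb =>
  p.mem_congr (fun a => (rz_substY_relabel_inl φ a b d₀).symm)
    ((hinv φ d b (hq.sameTypeOver (hb.mono Set.subset_union_left))).mp hφ)

end Paper

open Paper in
/-- If a global `M`-invariant type `p` satisfies
`(p ⊗ q)|_M = (q ⊗ p)|_M` for every global type `q` finitely satisfiable in `M`,
then `p` is a heir of `p|_M` : every formula `φ(x;d) ∈ p` (with `φ` over `M`,
`d` from `U`) is satisfied with some parameter tuple from `M`. -/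
theorem stmt_1 {L : Language} {U : Type*} [L.Structure U]
    (M : L.ElementarySubstructure U) (hmon : Monster L U (M : Set U))
    {m : ℕ} (p : GType L U (Fin m)) (hinv : Invariant (M : Set U) p)
    (hcomm : ∀ (k : ℕ) (q : GType L U (Fin k)), FinSatIn (M : Set U) q →
      CommuteOn (M : Set U) (M : Set U) p q) :
    ∀ {n : ℕ} (φ : L.Formula (Fin m ⊕ Fin n)) (d : Fin n → U), p.mem φ d →
      ∃ b : Fin n → U, (∀ i, b i ∈ M) ∧ p.mem φ b := by
  intro n φ d hφ
  rcases isEmpty_or_nonempty U with _ | _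
  · exact ⟨d, fun i => isEmptyElim (d i), hφ⟩
  obtain ⟨q, hqM, hqd⟩ := exists_finSatIn_realizesOver M d
  obtain ⟨a, ha⟩ := hmon.exists_realizesOver p
  have hpq := prodMem_relabel_inl hinv hqd hφ finZeroElim
  have hqp := (hcomm n q hqM _ finZeroElim finZeroElim).mp hpq
  have ha' : RealizesOver p a ((M : Set U) ∪ Set.range finZeroElim) := by
    rwa [Set.range_eq_empty, Set.union_empty]
  obtain ⟨b, hbM, hb⟩ := hqM _ _ (hqp a ha')
  exact ⟨b, hbM, ha.mem_of_rz hbM ((rz_substX_relabel_inl φ a b _).mp hb)⟩
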